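/- Let ∇₁, ..., ∇ₖ : ℝⁿ → ℝⁿ satisfy: (i) ‖∇ᵢ(W)‖ ≤ α for all W, and (ii) ‖∇ᵢ(U) - ∇ᵢ(V)‖ ≤ β‖U - V‖ for all U, V (β-Lipschitz). Starting from W₀ ∈ ℝⁿ, define the sequential iterates Ŵ₀ = W₀, Ŵₗ = Ŵₗ₋₁ - η ∇ₗ(Ŵₗ₋₁), and the batched update W' = W₀ - η (∇₁(W₀) + ∇₂(W₀) + ... + ∇ₖ(W₀)). Then ‖Ŵₖ - W'‖ ≤ η² α β · k(k-1)/2. -/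
import Mathlib


/-- Batched-vs-sequential SGD comparison: with gradients uniformly bounded by `α`
and `β`-Lipschitz, the result of `k` sequential SGD steps differs from the one-shot
batched update by at most `η²·α·β·k(k-1)/2`. -/
theorem stmt_2 {n : ℕ} (k : ℕ) (η α β : ℝ) (hη : 0 < η) (hα : 0 ≤ α) (hβ : 0 ≤ β)
    (grad : ℕ → EuclideanSpace ℝ (Fin n) → EuclideanSpace ℝ (Fin n))
    (hbound : ∀ i, ∀ W, ‖grad i W‖ ≤ α)
    (hlip : ∀ i, ∀ U V, ‖grad i U - grad i V‖ ≤ β * ‖U - V‖)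
    (W₀ : EuclideanSpace ℝ (Fin n)) (Wseq : ℕ → EuclideanSpace ℝ (Fin n))
    (h0 : Wseq 0 = W₀)
    (hrec : ∀ l, 1 ≤ l → l ≤ k → Wseq l = Wseq (l - 1) - η • grad l (Wseq (l - 1)))
    (W' : EuclideanSpace ℝ (Fin n))
    (hW' : W' = W₀ - η • ∑ l ∈ Finset.Icc 1 k, grad l W₀) :
    ‖Wseq k - W'‖ ≤ η ^ 2 * α * β * ((k : ℝ) * ((k : ℝ) - 1)) / 2 := by
  -- closed form for the sequential iterates
  have key : ∀ m, m ≤ k →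
      Wseq m = W₀ - η • ∑ l ∈ Finset.Icc 1 m, grad l (Wseq (l - 1)) := by
    intro m
    induction m with
    | zero => intro _; simp [h0]
    | succ m ih =>
      intro hm
      have hm' : m ≤ k := Nat.le_of_succ_le hm
      rw [hrec (m + 1) (by omega) hm, Finset.sum_Icc_succ_top (by omega : 1 ≤ m + 1)]
      simp only [Nat.add_sub_cancel]
      rw [ih hm', smul_add, sub_sub]
  -- drift bound
  have drift : ∀ m, m ≤ k → ‖Wseq m - W₀‖ ≤ (m : ℝ) * η * α := by
    intro m hm
    rw [key m hm]
    have : W₀ - η • ∑ l ∈ Finset.Icc 1 m, grad l (Wseq (l - 1)) - W₀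
        = -(η • ∑ l ∈ Finset.Icc 1 m, grad l (Wseq (l - 1))) := by abel
    rw [this, norm_neg, norm_smul, Real.norm_eq_abs, abs_of_pos hη]
    calc η * ‖∑ l ∈ Finset.Icc 1 m, grad l (Wseq (l - 1))‖
        ≤ η * ∑ l ∈ Finset.Icc 1 m, ‖grad l (Wseq (l - 1))‖ :=
          mul_le_mul_of_nonneg_left (norm_sum_le _ _) hη.le
      _ ≤ η * ∑ l ∈ Finset.Icc 1 m, α := by
          gcongr with l hl
          exact hbound l _
      _ = η * (m * α) := by
          rw [Finset.sum_const, Nat.card_Icc]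
          simp [nsmul_eq_mul]
      _ = (m : ℝ) * η * α := by ring
  rw [key k le_rfl, hW']
  have hdiff : W₀ - η • ∑ l ∈ Finset.Icc 1 k, grad l (Wseq (l - 1))
      - (W₀ - η • ∑ l ∈ Finset.Icc 1 k, grad l W₀)
      = η • ∑ l ∈ Finset.Icc 1 k, (grad l W₀ - grad l (Wseq (l - 1))) := by
    rw [Finset.sum_sub_distrib, smul_sub]
    abel
  rw [hdiff, norm_smul, Real.norm_eq_abs, abs_of_pos hη]
  have hterm : ∀ l ∈ Finset.Icc 1 k,
      ‖grad l W₀ - grad l (Wseq (l - 1))‖ ≤ β * (((l : ℝ) - 1) * η * α) := by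
    intro l hl
    simp only [Finset.mem_Icc] at hl
    calc ‖grad l W₀ - grad l (Wseq (l - 1))‖
        ≤ β * ‖W₀ - Wseq (l - 1)‖ := hlip l _ _
      _ = β * ‖Wseq (l - 1) - W₀‖ := by rw [norm_sub_rev]
      _ ≤ β * (((l - 1 : ℕ) : ℝ) * η * α) := by
          gcongr
          exact drift (l - 1) (by omega)
      _ = β * (((l : ℝ) - 1) * η * α) := by
          rw [Nat.cast_sub hl.1]; norm_num
  have hsum : ∀ m : ℕ, ∑ l ∈ Finset.Icc 1 m, (((l : ℝ) - 1)) = (m : ℝ) * ((m : ℝ) - 1) / 2 := by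
    intro m
    induction m with
    | zero => simp
    | succ m ih =>
      rw [Finset.sum_Icc_succ_top (by omega), ih]
      push_cast
      ring
  calc η * ‖∑ l ∈ Finset.Icc 1 k, (grad l W₀ - grad l (Wseq (l - 1)))‖
      ≤ η * ∑ l ∈ Finset.Icc 1 k, ‖grad l W₀ - grad l (Wseq (l - 1))‖ :=
        mul_le_mul_of_nonneg_left (norm_sum_le _ _) hη.le
    _ ≤ η * ∑ l ∈ Finset.Icc 1 k, β * (((l : ℝ) - 1) * η * α) := by
        gcongr with l hl
        exact hterm l hl
    _ = η * (β * η * α * ∑ l ∈ Finset.Icc 1 k, ((l : ℝ) - 1)) := by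
        simp only [Finset.mul_sum]
        exact Finset.sum_congr rfl fun l _ => by ring
    _ = η ^ 2 * α * β * ((k : ℝ) * ((k : ℝ) - 1)) / 2 := by
        rw [hsum k]; ring
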